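/- Let H be a Hilbert space, K ⊆ H, F : K → H monotone, and suppose for each ε in a sequence εⱼ → 0 there exists x_ε ∈ K with ⟨F(x_ε) + εL x_ε, w − x_ε⟩ ≥ 0 for all w ∈ K, where L is bounded self-adjoint positive semidefinite with sup_ε ‖√ε x_ε‖ ≤ C. If x_ε ⇀ x weakly in H with x ∈ closure of K and ⟨F(w), w − x_ε⟩ → ⟨F(w), w − x⟩ for each w ∈ K, then ⟨F(w), w − x⟩ ≥ 0 for all w ∈ K. -/

import Mathlib

/-!
Monotonicity of `F` moves the variational inequality from `F x_ε` to `F w`: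
`⟪F w, w - x_ε⟫ ≥ ⟪F x_ε, w - x_ε⟫ ≥ -ε ⟪L x_ε, w - x_ε⟫`. Positivity of `L` and Cauchy–Schwarz
bound the regularization term by `ε ‖L‖ ‖x_ε‖ ‖w‖ ≤ √ε C ‖L‖ ‖w‖`, which tends to `0`, so the
inequality `⟪F w, w - x⟫ ≥ 0` survives in the limit.
-/

open RealInnerProductSpace Filter Topology

section

variable {X : Type*} [NormedAddCommGroup X] [InnerProductSpace ℝ X]

theorem neg_mul_inner_le_of_monotone_of_regularized_vi {F : X → X} {L : X →L[ℝ] X}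
    {t : ℝ} {w y : X} (hmono : 0 ≤ ⟪F w - F y, w - y⟫)
    (hvi : 0 ≤ ⟪F y + t • L y, w - y⟫) :
    -(t * ⟪L y, w - y⟫) ≤ ⟪F w, w - y⟫ := by
  rw [inner_sub_left] at hmono
  rw [inner_add_left, real_inner_smul_left] at hvi
  linarith

theorem inner_apply_sub_le_of_inner_apply_self_nonneg (L : X →L[ℝ] X) {y : X}
    (hpsd : 0 ≤ ⟪L y, y⟫) (w : X) :
    ⟪L y, w - y⟫ ≤ ‖L‖ * ‖y‖ * ‖w‖ :=
  calc ⟪L y, w - y⟫ = ⟪L y, w⟫ - ⟪L y, y⟫ := inner_sub_right _ _ _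
    _ ≤ ‖L y‖ * ‖w‖ := by linarith [real_inner_le_norm (L y) w]
    _ ≤ ‖L‖ * ‖y‖ * ‖w‖ := by gcongr; exact L.le_opNorm y

theorem mul_inner_apply_sub_le_sqrt_mul (L : X →L[ℝ] X) {t C : ℝ} {y : X} (ht : 0 ≤ t)
    (hpsd : 0 ≤ ⟪L y, y⟫) (hbound : √t * ‖y‖ ≤ C) (w : X) :
    t * ⟪L y, w - y⟫ ≤ √t * (C * (‖L‖ * ‖w‖)) :=
  calc t * ⟪L y, w - y⟫ ≤ t * (‖L‖ * ‖y‖ * ‖w‖) := by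
        gcongr; exact inner_apply_sub_le_of_inner_apply_self_nonneg L hpsd w
    _ = √t * (√t * ‖y‖) * (‖L‖ * ‖w‖) := by
        rw [← mul_assoc √t, Real.mul_self_sqrt ht]; ring
    _ ≤ √t * C * (‖L‖ * ‖w‖) := by gcongr
    _ = √t * (C * (‖L‖ * ‖w‖)) := by ring

end

theorem stmt_19_general {X : Type*} [NormedAddCommGroup X] [InnerProductSpace ℝ X]
    (K : Set X) (F : X → X)
    (hmono : ∀ a ∈ K, ∀ b ∈ K, 0 ≤ ⟪F a - F b, a - b⟫)
    (L : X →L[ℝ] X) (hLpsd : ∀ y, 0 ≤ ⟪L y, y⟫)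
    (ε : ℕ → ℝ) (hεpos : ∀ j, 0 < ε j) (hε0 : Filter.Tendsto ε Filter.atTop (nhds 0))
    (xseq : ℕ → X) (hxK : ∀ j, xseq j ∈ K)
    (hVI : ∀ j, ∀ w ∈ K, 0 ≤ ⟪F (xseq j) + ε j • L (xseq j), w - xseq j⟫)
    (C : ℝ) (hbound : ∀ j, Real.sqrt (ε j) * ‖xseq j‖ ≤ C)
    (x : X)
    (hconv : ∀ w ∈ K, Filter.Tendsto (fun j => ⟪F w, w - xseq j⟫) Filter.atTop
      (nhds ⟪F w, w - x⟫)) :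
    ∀ w ∈ K, 0 ≤ ⟪F w, w - x⟫ := by
  intro w hw
  have hlower : ∀ j, -(√(ε j) * (C * (‖L‖ * ‖w‖))) ≤ ⟪F w, w - xseq j⟫ := fun j =>
    (neg_le_neg (mul_inner_apply_sub_le_sqrt_mul L (hεpos j).le (hLpsd _) (hbound j) w)).trans
      (neg_mul_inner_le_of_monotone_of_regularized_vi (hmono w hw _ (hxK j)) (hVI j w hw))
  have hlower_lim : Tendsto (fun j => -(√(ε j) * (C * (‖L‖ * ‖w‖)))) atTop (𝓝 0) := by
    simpa using (hε0.sqrt.mul_const (C * (‖L‖ * ‖w‖))).neg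
  exact le_of_tendsto_of_tendsto' hlower_lim (hconv w hw) hlower

/-- Minty's method in the limit `ε → 0`: the weak limit of solutions of the regularized
variational inequalities solves the limiting variational inequality. -/
theorem stmt_19 {X : Type*} [NormedAddCommGroup X] [InnerProductSpace ℝ X] [CompleteSpace X]
    (K : Set X) (F : X → X)
    (hmono : ∀ a ∈ K, ∀ b ∈ K, 0 ≤ ⟪F a - F b, a - b⟫)
    (L : X →L[ℝ] X) (hLsa : IsSelfAdjoint L) (hLpsd : ∀ y, 0 ≤ ⟪L y, y⟫)
    (ε : ℕ → ℝ) (hεpos : ∀ j, 0 < ε j) (hε0 : Filter.Tendsto ε Filter.atTop (nhds 0))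
    (xseq : ℕ → X) (hxK : ∀ j, xseq j ∈ K)
    (hVI : ∀ j, ∀ w ∈ K, 0 ≤ ⟪F (xseq j) + ε j • L (xseq j), w - xseq j⟫)
    (C : ℝ) (hbound : ∀ j, Real.sqrt (ε j) * ‖xseq j‖ ≤ C)
    (x : X) (hx : x ∈ closure K)
    (hconv : ∀ w ∈ K, Filter.Tendsto (fun j => ⟪F w, w - xseq j⟫) Filter.atTop
      (nhds ⟪F w, w - x⟫)) :
    ∀ w ∈ K, 0 ≤ ⟪F w, w - x⟫ :=
  stmt_19_general K F hmono L hLpsd ε hεpos hε0 xseq hxK hVI C hbound x hconv
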